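/- If G is a connected well-covered graph with diam(G) = 2, then Γρ(G) = χρ(G). -/

import Mathlib

open SimpleGraph

/-- A packing `k`-coloring of `G`: colors in `{1,…,k}` and vertices of equal color `i`
are at distance greater than `i` (vertices in different components are unconstrained). -/
def IsPackingColoring {V : Type*} (G : SimpleGraph V) (k : ℕ) (c : V → ℕ) : Prop :=
  (∀ v, 1 ≤ c v ∧ c v ≤ k) ∧
  ∀ u v, u ≠ v → c u = c v → G.Reachable u v → c u < G.dist u v

/-- A greedy packing `k`-coloring: a packing `k`-coloring that uses color `k` and in which
every vertex of color `i ≥ 2` has, for every `j < i`, a vertex of color `j`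
at distance at most `j`. -/
def IsGreedyPackingColoring {V : Type*} (G : SimpleGraph V) (k : ℕ) (c : V → ℕ) : Prop :=
  IsPackingColoring G k c ∧ (∃ v, c v = k) ∧
  ∀ v, ∀ j, 1 ≤ j → j < c v → ∃ u, c u = j ∧ G.Reachable u v ∧ G.dist u v ≤ j

/-- The Grundy packing chromatic number: the largest `k` admitting a greedy packing
`k`-coloring. -/
noncomputable def grundyPackingChromaticNumber {V : Type*} (G : SimpleGraph V) : ℕ :=
  sSup {k | ∃ c : V → ℕ, IsGreedyPackingColoring G k c}

/-- The packing chromatic number: the smallest `k` admitting a packing `k`-coloring. -/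
noncomputable def packingChromaticNumber {V : Type*} (G : SimpleGraph V) : ℕ :=
  sInf {k | ∃ c : V → ℕ, IsPackingColoring G k c}

/-- `s` is an independent set of `G`. -/
def IsIndepFinset {V : Type*} (G : SimpleGraph V) (s : Finset V) : Prop :=
  ∀ u ∈ s, ∀ v ∈ s, ¬ G.Adj u v

/-- `s` is a maximal independent set of `G`. -/
def IsMaxIndepFinset {V : Type*} (G : SimpleGraph V) (s : Finset V) : Prop :=
  IsIndepFinset G s ∧ ∀ t : Finset V, IsIndepFinset G t → s ⊆ t → s = t

/-- The independent domination number `i(G)`: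
the minimum cardinality of a maximal independent set. -/
noncomputable def indepDomNum {V : Type*} (G : SimpleGraph V) [Fintype V] : ℕ :=
  sInf {n | ∃ s : Finset V, IsMaxIndepFinset G s ∧ s.card = n}

/-- The graph `G^ℓ`: same vertices, `u ∼ v` iff `u ≠ v` and `d_G(u,v) ≤ ℓ`. -/
def distPow {V : Type*} (G : SimpleGraph V) (ℓ : ℕ) : SimpleGraph V where
  Adj u v := u ≠ v ∧ G.dist u v ≤ ℓ
  symm := by
    constructor
    rintro u v ⟨h1, h2⟩
    exact ⟨h1.symm, by rwa [SimpleGraph.dist_comm]⟩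
  loopless := by constructor; rintro v ⟨h, _⟩; exact h rfl

/-- The graph `G(k)`: vertex set is `k` disjoint copies of `V(G)`, the copy `i : Fin k`
playing the role of `G^(i+1)`; the `k` copies of each vertex form a clique, and within the
`i`-th copy two distinct vertices are adjacent iff their distance in `G` is at most `i+1`. -/
def levelGraph {V : Type*} (G : SimpleGraph V) (k : ℕ) : SimpleGraph (V × Fin k) where
  Adj p q := (p.1 = q.1 ∧ p.2 ≠ q.2) ∨
    (p.1 ≠ q.1 ∧ p.2 = q.2 ∧ G.dist p.1 q.1 ≤ (p.2 : ℕ) + 1)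
  symm := by
    constructor
    rintro p q (⟨h1, h2⟩ | ⟨h1, h2, h3⟩)
    · exact Or.inl ⟨h1.symm, h2.symm⟩
    · refine Or.inr ⟨h1.symm, h2.symm, ?_⟩
      rw [SimpleGraph.dist_comm, ← h2]
      exact h3
  loopless := by constructor; rintro p (⟨_, h⟩ | ⟨h, _, _⟩) <;> exact h rfl

/-- `A` is a maximal independent set of the subgraph of `H` induced on `S`. -/
def IsMaxIndepSetOn {V : Type*} (H : SimpleGraph V) (S : Set V) (A : Set V) : Prop :=
  A ⊆ S ∧ (∀ u ∈ A, ∀ v ∈ A, ¬ H.Adj u v) ∧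
  ∀ B : Set V, B ⊆ S → (∀ u ∈ B, ∀ v ∈ B, ¬ H.Adj u v) → A ⊆ B → A = B

/-- The eccentricity of a vertex. -/
noncomputable def eccent {V : Type*} (G : SimpleGraph V) [Fintype V] (v : V) : ℕ :=
  Finset.univ.sup (fun u => G.dist v u)

/-- The radius of a graph. -/
noncomputable def graphRadius {V : Type*} (G : SimpleGraph V) [Fintype V] : ℕ :=
  sInf (Set.range (eccent G))

/-- The diameter of a graph. -/
noncomputable def graphDiam {V : Type*} (G : SimpleGraph V) [Fintype V] : ℕ :=
  Finset.univ.sup (eccent G)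

/-- The diametrical graph `D(G)`: `x ∼ y` iff `d_G(x,y) = diam(G)`. -/
noncomputable def diamGraph {V : Type*} (G : SimpleGraph V) [Fintype V] : SimpleGraph V where
  Adj u v := u ≠ v ∧ G.dist u v = graphDiam G
  symm := by
    constructor
    rintro u v ⟨h1, h2⟩
    exact ⟨h1.symm, by rwa [SimpleGraph.dist_comm]⟩
  loopless := by constructor; rintro v ⟨h, _⟩; exact h rfl

/-- `Q` is a clique of the subgraph of `H` induced on `S`. -/
def IsCliqueFinsetOn {V : Type*} (H : SimpleGraph V) (S : Set V) (Q : Finset V) : Prop :=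
  ↑Q ⊆ S ∧ ∀ u ∈ Q, ∀ v ∈ Q, u ≠ v → H.Adj u v

/-- `Q` is a maximal clique of the subgraph of `H` induced on `S`. -/
def IsMaxCliqueFinsetOn {V : Type*} (H : SimpleGraph V) (S : Set V) (Q : Finset V) : Prop :=
  IsCliqueFinsetOn H S Q ∧ ∀ R : Finset V, IsCliqueFinsetOn H S R → Q ⊆ R → Q = R

/-- The join `G ∨ H` of two graphs. -/
def joinGraph {V W : Type*} (G : SimpleGraph V) (H : SimpleGraph W) :
    SimpleGraph (V ⊕ W) where
  Adj p q := match p, q with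
    | .inl u, .inl v => G.Adj u v
    | .inr u, .inr v => H.Adj u v
    | .inl _, .inr _ => True
    | .inr _, .inl _ => True
  symm := by
    constructor
    rintro (u | u) (v | v) h
    · exact G.adj_symm h
    · trivial
    · trivial
    · exact H.adj_symm h
  loopless := by
    constructor
    rintro (u | u) h
    · exact G.irrefl h
    · exact H.irrefl h

/-- `K_{n,n}` minus a perfect matching: parts `{u_i}` and `{v_i}`, with `u_i ∼ v_j` iff
`i ≠ j`. -/
def completeBipartiteMinusMatching (n : ℕ) : SimpleGraph (Fin n ⊕ Fin n) where
  Adj p q := match p, q with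
    | .inl i, .inr j => i ≠ j
    | .inr i, .inl j => i ≠ j
    | _, _ => False
  symm := by constructor; rintro (i | i) (j | j) h <;> first | exact h.symm | exact h
  loopless := by constructor; rintro (i | i) h <;> exact h


/-!
In a connected graph of diameter at most 2, two vertices of the same color `i ≥ 2` would be at
distance `≤ 2 ≤ i`, so a packing coloring uses each color `≥ 2` at most once while color `1` is an
independent set: `χρ(G) ≥ n - α(G) + 1`. In a greedy packing `k`-coloring every color `1, …, k`
occurs and the color-`1` class is a maximal independent set, so `k ≤ n - i(G) + 1`; conversely,
coloring any maximal independent set `S` with `1` and the other vertices with distinct colors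
`2, 3, …` is a greedy packing `(n - |S| + 1)`-coloring. For well-covered graphs `α(G) = i(G)`,
so all these bounds meet.
-/

open Finset

section

variable {V : Type*} {G : SimpleGraph V}

theorem dist_le_graphDiam [Fintype V] (G : SimpleGraph V) (u v : V) :
    G.dist u v ≤ graphDiam G :=
  (le_sup (f := fun w => G.dist u w) (mem_univ v)).trans
    (le_sup (f := _root_.eccent G) (mem_univ u))

theorem exists_isMaxIndepFinset_superset [Fintype V] {s : Finset V} (hs : IsIndepFinset G s) :
    ∃ t, IsMaxIndepFinset G t ∧ s ⊆ t := by
  obtain ⟨t, ⟨ht, hst⟩, hmax⟩ := Set.exists_max_image {t : Finset V | IsIndepFinset G t ∧ s ⊆ t}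
    card (Set.toFinite _) ⟨s, hs, subset_rfl⟩
  refine ⟨t, ⟨ht, fun t' ht' htt' => ?_⟩, hst⟩
  exact eq_of_subset_of_card_le htt' (hmax t' ⟨ht', hst.trans htt'⟩)

theorem IsMaxIndepFinset.exists_adj [DecidableEq V] {S : Finset V} (hS : IsMaxIndepFinset G S)
    {v : V} (hv : v ∉ S) : ∃ u ∈ S, G.Adj u v := by
  by_contra! h
  have hins : IsIndepFinset G (insert v S) := by
    simp only [IsIndepFinset, mem_insert, forall_eq_or_imp, G.irrefl, not_false_eq_true,
      true_and]
    exact ⟨fun b hb hadj => h b hb hadj.symm, fun a ha => ⟨h a ha, hS.1 a ha⟩⟩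
  exact hv (hS.2 _ hins (subset_insert v S) ▸ mem_insert_self v S)

variable {k : ℕ} {c : V → ℕ}

theorem IsPackingColoring.isIndepFinset_one [Fintype V] (hc : IsPackingColoring G k c) :
    IsIndepFinset G {v | c v = 1} := by
  intro u hu v hv hadj
  rw [mem_filter] at hu hv
  have := hc.2 u v hadj.ne (hu.2.trans hv.2.symm) hadj.reachable
  rw [hu.2, dist_eq_one_iff_adj.2 hadj] at this
  exact this.false

theorem IsPackingColoring.card_filter_ne_one_lt [Fintype V] (hc : IsPackingColoring G k c)
    (hG : G.Connected) (h2 : ∀ u v, G.dist u v ≤ 2) : #{v | c v ≠ 1} < k := by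
  have hmaps : Set.MapsTo c ({v | c v ≠ 1} : Finset V) (Icc 2 k) := by
    intro v hv
    have := (hc.1 v).1
    have := (mem_filter.1 (mem_coe.1 hv)).2
    exact mem_coe.2 (mem_Icc.2 ⟨by omega, (hc.1 v).2⟩)
  have hinj : Set.InjOn c ({v | c v ≠ 1} : Finset V) := by
    intro u hu v hv huv
    by_contra hne
    have := hc.2 u v hne huv (hG u v)
    have := h2 u v
    have := mem_Icc.1 (hmaps hu)
    omega
  have hcard := card_le_card_of_injOn c hmaps hinj
  obtain ⟨v⟩ := hG.nonempty
  have := hc.1 v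
  rw [Nat.card_Icc] at hcard
  omega

theorem IsGreedyPackingColoring.exists_eq (hc : IsGreedyPackingColoring G k c) {j : ℕ}
    (hj : 1 ≤ j) (hjk : j ≤ k) : ∃ v, c v = j := by
  obtain ⟨w, hw⟩ := hc.2.1
  rcases hjk.lt_or_eq with hjk | rfl
  · obtain ⟨u, hu, -⟩ := hc.2.2 w j hj (hw ▸ hjk)
    exact ⟨u, hu⟩
  · exact ⟨w, hw⟩

theorem IsGreedyPackingColoring.le_card_filter_ne_one_add_one [Fintype V]
    (hc : IsGreedyPackingColoring G k c) :
    k ≤ #{v | c v ≠ 1} + 1 := by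
  have hsurj : Set.SurjOn c ({v | c v ≠ 1} : Finset V) (Icc 2 k) := by
    intro j hj
    obtain ⟨hj2, hjk⟩ := mem_Icc.1 (mem_coe.1 hj)
    obtain ⟨v, hv⟩ := hc.exists_eq (by omega : 1 ≤ j) hjk
    exact ⟨v, mem_coe.2 (mem_filter.2 ⟨mem_univ v, by omega⟩), hv⟩
  have := card_le_card_of_surjOn c hsurj
  rw [Nat.card_Icc] at this
  omega

theorem IsGreedyPackingColoring.isMaxIndepFinset_one [Fintype V]
    (hc : IsGreedyPackingColoring G k c) : IsMaxIndepFinset G {v | c v = 1} := by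
  refine ⟨hc.1.isIndepFinset_one, fun t ht hsub => ?_⟩
  by_contra hne
  obtain ⟨v, hvt, hv⟩ := exists_of_ssubset (Finset.ssubset_iff_subset_ne.2 ⟨hsub, hne⟩)
  have hv1 : 1 < c v := by
    have := (hc.1.1 v).1
    simp only [mem_filter, mem_univ, true_and] at hv
    omega
  obtain ⟨u, hu, huv, hdist⟩ := hc.2.2 v 1 le_rfl hv1
  have hne : u ≠ v := by rintro rfl; omega
  have hadj : G.Adj u v :=
    dist_eq_one_iff_adj.1 (le_antisymm hdist (huv.pos_dist_of_ne hne))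
  exact ht u (hsub (by simpa using hu)) v hvt hadj

theorem IsMaxIndepFinset.exists_isGreedyPackingColoring [Fintype V] [DecidableEq V]
    {S : Finset V} (hS : IsMaxIndepFinset G S) (hG : G.Connected)
    (h2 : ∀ u v, G.dist u v ≤ 2) : ∃ c, IsGreedyPackingColoring G (#Sᶜ + 1) c := by
  let e := Sᶜ.equivFin
  let c : V → ℕ := fun v => if h : v ∈ S then 1 else e ⟨v, mem_compl.2 h⟩ + 2
  have hc_mem : ∀ v ∈ S, c v = 1 := fun v hv => dif_pos hv
  have hc_symm : ∀ i, c (e.symm i : V) = i + 2 := fun i => by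
    simp [c, mem_compl.1 (e.symm i).2]
  have h_symm : ∀ v ∉ S, ∃ i, (e.symm i : V) = v := fun v hv => ⟨e ⟨v, mem_compl.2 hv⟩, by simp⟩
  have hc_range : ∀ v, 1 ≤ c v ∧ c v ≤ #Sᶜ + 1 := by
    intro v
    by_cases hv : v ∈ S
    · simp [hc_mem v hv]
    · obtain ⟨i, rfl⟩ := h_symm v hv
      rw [hc_symm]
      omega
  refine ⟨c, ⟨hc_range, fun u v hne huv hreach => ?_⟩, ?_, fun v j hj hjv => ?_⟩
  · by_cases hu : u ∈ S <;> by_cases hv : v ∈ S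
    · exact hc_mem u hu ▸ hreach.one_lt_dist_of_ne_of_not_adj hne (hS.1 u hu v hv)
    · obtain ⟨i, rfl⟩ := h_symm v hv
      rw [hc_mem u hu, hc_symm] at huv
      omega
    · obtain ⟨i, rfl⟩ := h_symm u hu
      rw [hc_mem v hv, hc_symm] at huv
      omega
    · obtain ⟨i, rfl⟩ := h_symm u hu
      obtain ⟨i', rfl⟩ := h_symm v hv
      rw [hc_symm, hc_symm] at huv
      exact absurd (congrArg (fun i => (e.symm i : V)) (Fin.ext (by omega))) hne
  · rcases Nat.eq_zero_or_pos #Sᶜ with h0 | h0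
    · obtain ⟨v⟩ := hG.nonempty
      have hv : v ∈ S := by_contra fun hv => (card_pos.2 ⟨v, mem_compl.2 hv⟩).ne' h0
      exact ⟨v, by simp [hc_mem v hv, h0]⟩
    · exact ⟨e.symm ⟨#Sᶜ - 1, by omega⟩, by rw [hc_symm, Fin.val_mk]; omega⟩
  · have hv : v ∉ S := fun hv => by simp [hc_mem v hv] at hjv; omega
    obtain ⟨i, rfl⟩ := h_symm v hv
    rw [hc_symm] at hjv
    rcases hj.eq_or_lt with rfl | hj
    · obtain ⟨u, hu, hadj⟩ := hS.exists_adj hv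
      exact ⟨u, hc_mem u hu, hadj.reachable, (dist_eq_one_iff_adj.2 hadj).le⟩
    · refine ⟨e.symm ⟨j - 2, by omega⟩, ?_, hG _ _, (h2 _ _).trans hj⟩
      rw [hc_symm, Fin.val_mk]
      omega

end

/-- If `G` is a connected well-covered graph with `diam(G) = 2`, then
`Γρ(G) = χρ(G)`. -/
theorem grundyPackingChromaticNumber_eq_packingChromaticNumber_of_wellCovered {V : Type*}
    [Fintype V] (G : SimpleGraph V) (hG : G.Connected)
    (hwc : ∀ A B : Finset V, IsMaxIndepFinset G A → IsMaxIndepFinset G B →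
      A.card = B.card)
    (hd : graphDiam G = 2) :
    grundyPackingChromaticNumber G = packingChromaticNumber G := by
  classical
  have h2 : ∀ u v, G.dist u v ≤ 2 := fun u v => hd ▸ dist_le_graphDiam G u v
  obtain ⟨S, hS, -⟩ :=
    exists_isMaxIndepFinset_superset (G := G) (s := ∅) (by simp [IsIndepFinset])
  have hS_card := card_add_card_compl S
  have hsplit (c : V → ℕ) : #{v | c v = 1} + #{v | c v ≠ 1} = Fintype.card V :=
    card_filter_add_card_filter_not _
  obtain ⟨c₀, hc₀⟩ := hS.exists_isGreedyPackingColoring hG h2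
  have hgreedy : IsGreatest {k | ∃ c, IsGreedyPackingColoring G k c} (#Sᶜ + 1) := by
    refine ⟨⟨c₀, hc₀⟩, fun k ⟨c, hc⟩ => ?_⟩
    have := hwc _ _ hc.isMaxIndepFinset_one hS
    have := hc.le_card_filter_ne_one_add_one
    have := hsplit c
    omega
  have hpacking : IsLeast {k | ∃ c, IsPackingColoring G k c} (#Sᶜ + 1) := by
    refine ⟨⟨c₀, hc₀.1⟩, fun k ⟨c, hc⟩ => ?_⟩
    obtain ⟨T, hT, hsub⟩ := exists_isMaxIndepFinset_superset hc.isIndepFinset_one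
    have := card_le_card hsub
    have := hwc _ _ hT hS
    have := hc.card_filter_ne_one_lt hG h2
    have := hsplit c
    omega
  rw [grundyPackingChromaticNumber, packingChromaticNumber, hgreedy.csSup_eq, hpacking.csInf_eq]
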